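/- For every integer n ≥ 1, the polynomials R_n satisfy the recurrence R_{n+1}(x) = ((2n+1)x/((n+1)(n+3)) + (8n^2+8n+7)/(2(n+1)(n+3))) · R_n(x) − ((4n−1)(4n+1)(n−2)/(4n(n+1)(n+3))) · R_{n−1}(x) + (5x/((n+1)(n+3))) · R_n'(x). -/

import Mathlib

open Polynomial

/-- The Boros-Moll polynomial `P_n(x)`. -/
noncomputable def borosMoll (n : ℕ) : Polynomial ℝ :=
  ((2 : ℝ) ^ (2 * n))⁻¹ • ∑ j ∈ Finset.range (n + 1),
    Polynomial.C ((2 : ℝ) ^ j * (Nat.choose (2 * n - 2 * j) (n - j) : ℝ) *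
      (Nat.choose (n + j) j : ℝ)) * (Polynomial.X + 1) ^ j

/-- The coefficients `d_i(n)`, with the convention `d_i(n) = 0` for `i < 0` or `i > n`. -/
noncomputable def bmCoeff (i : ℤ) (n : ℕ) : ℝ :=
  if 0 ≤ i then (borosMoll n).coeff i.toNat else 0

/-- The polynomial `Q_n(x) = ∑ d_i(n)/i! x^i`. -/
noncomputable def Q (n : ℕ) : Polynomial ℝ :=
  ∑ i ∈ Finset.range (n + 1),
    Polynomial.C ((borosMoll n).coeff i / (Nat.factorial i : ℝ)) * Polynomial.X ^ i

/-- The polynomial `R_n(x) = ∑ d_i(n)/(i+2)! x^i`. -/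
noncomputable def R (n : ℕ) : Polynomial ℝ :=
  ∑ i ∈ Finset.range (n + 1),
    Polynomial.C ((borosMoll n).coeff i / (Nat.factorial (i + 2) : ℝ)) * Polynomial.X ^ i

/-- A real polynomial has only real zeros: every complex root is real. -/
def RealRooted (p : Polynomial ℝ) : Prop :=
  ∀ z : ℂ, Polynomial.aeval z p = 0 → z.im = 0

/-- `g` strictly interlaces `f`: `deg f = deg g + 1`, the zeros
`r_1 ≥ ⋯ ≥ r_{m+1}` of `f` and `s_1 ≥ ⋯ ≥ s_m` of `g` satisfy
`r_{i+1} ≤ s_i ≤ r_i`, and `f, g` have no common zeros. -/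
def StrictlyInterlaces (g f : Polynomial ℝ) : Prop :=
  f.natDegree = g.natDegree + 1 ∧
  ∃ (s : Fin g.natDegree → ℝ) (r : Fin (g.natDegree + 1) → ℝ),
    Antitone s ∧ Antitone r ∧
    g.roots = Multiset.map s Finset.univ.val ∧
    f.roots = Multiset.map r Finset.univ.val ∧
    (∀ i : Fin g.natDegree, r i.succ ≤ s i ∧ s i ≤ r i.castSucc) ∧
    ∀ x : ℝ, ¬ (g.IsRoot x ∧ f.IsRoot x)

/-!
In the variable `t = x + 1` the Boros–Moll polynomial is `P_n(t - 1) = ∑ a(n, j) t ^ j` with the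
hypergeometric term `a(n, j) = 2 ^ j C(2n - 2j, n - j) C(n + j, j) / 4 ^ n`, extended by zero for
`j > n`. Its three ratios `a(n, k + 1) / a(n, k)`, `a(n + 1, k + 1) / a(n, k)` and
`a(n, k) / a(n + 1, k)` are rational functions of `n, k` whose denominators never vanish (they are
products of positive and of odd numbers), and they hold also across the boundary `k = n`. Hence
every coefficient of the shifted three-term recurrence is a rational multiple of a single `a(n, k)`
and reduces to an identity of rational functions. Substituting `t = x + 1` gives a recurrence for
`P_n` with the operator `x (x d/dx + 3)`, which the weights `1 / (i + 2)!` turn into the recurrence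
for `R_n`.
-/

theorem coeff_X_mul_derivative {R : Type*} [Semiring R] (p : R[X]) (k : ℕ) :
    (X * derivative p).coeff k = p.coeff k * k := by
  rcases k with _ | k
  · simp
  · rw [coeff_X_mul, coeff_derivative, Nat.cast_succ]

theorem coeff_X_sub_C_mul_derivative {R : Type*} [Ring R] (r : R) (p : R[X]) (k : ℕ) :
    ((X - C r) * derivative p).coeff k = p.coeff k * k - r * (p.coeff (k + 1) * (k + 1)) := by
  rw [sub_mul, coeff_sub, coeff_X_mul_derivative, coeff_C_mul, coeff_derivative]

theorem two_mul_sub_sub_one_ne_zero (a b : ℕ) : 2 * ((a : ℝ) - b) - 1 ≠ 0 := by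
  intro h
  have : 2 * (a : ℤ) - 2 * b = 1 := by exact_mod_cast (by linarith : 2 * (a : ℝ) - 2 * b = 1)
  omega

theorem cast_succ_mul_centralBinom_succ (m : ℕ) :
    ((m : ℝ) + 1) * (m + 1).centralBinom = 2 * (2 * m + 1) * m.centralBinom := by
  exact_mod_cast Nat.succ_mul_centralBinom_succ m

theorem cast_add_one_mul_choose (n k : ℕ) :
    ((n : ℝ) + 1) * n.choose k = (n + 1).choose (k + 1) * (k + 1) := by
  exact_mod_cast Nat.add_one_mul_choose_eq n k

theorem cast_choose_mul_add_one (n k : ℕ) :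
    ((n + k).choose k : ℝ) * (n + k + 1) = (n + k + 1).choose k * (n + 1) := by
  have h := Nat.choose_mul_succ_eq (n + k) k
  rw [show n + k + 1 - k = n + 1 by omega] at h
  exact_mod_cast h

noncomputable def borosMollTerm (n j : ℕ) : ℝ :=
  2 ^ j * (n - j).centralBinom * (n + j).choose j / 2 ^ (2 * n)

noncomputable def borosMollShift (n : ℕ) : ℝ[X] :=
  ∑ j ∈ Finset.range (n + 1), C (borosMollTerm n j) * X ^ j

theorem borosMoll_eq_comp (n : ℕ) : borosMoll n = (borosMollShift n).comp (X + 1) := by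
  simp only [borosMoll, borosMollShift, borosMollTerm, Polynomial.sum_comp, mul_comp, C_comp,
    X_pow_comp, Finset.smul_sum, smul_eq_C_mul, ← mul_assoc, ← C_mul]
  refine Finset.sum_congr rfl fun j _ => ?_
  rw [Nat.centralBinom_eq_two_mul_choose, Nat.mul_sub]
  congr 2
  ring

theorem coeff_borosMollShift (n k : ℕ) :
    (borosMollShift n).coeff k = if k ≤ n then borosMollTerm n k else 0 := by
  simp [borosMollShift, finsetSum_coeff, coeff_X_pow]

theorem coeff_borosMollShift_succ (n k : ℕ) :
    (borosMollShift n).coeff (k + 1) =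
      ((n : ℝ) - k) * (n + k + 1) / ((k + 1) * (2 * ((n : ℝ) - k) - 1)) *
        (borosMollShift n).coeff k := by
  simp only [coeff_borosMollShift]
  rcases lt_trichotomy k n with h | rfl | h
  · obtain ⟨m, rfl⟩ : ∃ m, n = k + m + 1 := ⟨n - k - 1, by omega⟩
    have hc := cast_succ_mul_centralBinom_succ m
    have hb := cast_add_one_mul_choose (k + m + 1 + k) k
    rw [if_pos (by omega), if_pos (by omega)]
    simp only [borosMollTerm, show k + m + 1 - (k + 1) = m by omega,
      show k + m + 1 - k = m + 1 by omega, show k + m + 1 + (k + 1) = k + m + 1 + k + 1 by omega,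
      show ((k + m + 1 : ℕ) : ℝ) - k = m + 1 by push_cast; ring]
    rw [show 2 * ((m : ℝ) + 1) - 1 = 2 * m + 1 by ring]
    push_cast at hc hb ⊢
    field_simp
    linear_combination (-2 ^ k * ((k + m + 1 + k + 1).choose (k + 1) : ℝ) * (k + 1)) * hc
      - (2 ^ k * (m + 1 : ℝ) * (m + 1).centralBinom) * hb
  · simp
  · rw [if_neg (by omega), if_neg (by omega), mul_zero]

theorem coeff_succ_borosMollShift_succ (n k : ℕ) :
    (borosMollShift (n + 1)).coeff (k + 1) =
      ((n : ℝ) + k + 1) * (n + k + 2) / (2 * (n + 1) * (k + 1)) * (borosMollShift n).coeff k := by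
  simp only [coeff_borosMollShift, add_le_add_iff_right]
  split_ifs
  · have hb := cast_add_one_mul_choose (n + k + 1) k
    have hb' := cast_choose_mul_add_one n k
    simp only [borosMollTerm, Nat.add_sub_add_right, show n + 1 + (k + 1) = n + k + 1 + 1 by omega]
    push_cast at hb ⊢
    field_simp
    linear_combination (-2 ^ (k + 2) * ((n - k).centralBinom : ℝ) * (n + 1) * 2 ^ (2 * n)) * hb
      - (2 ^ (k + 2) * 2 ^ (2 * n) * ((n - k).centralBinom : ℝ) * (n + k + 2)) * hb'
  · rw [mul_zero]

theorem coeff_borosMollShift_eq_coeff_succ (n k : ℕ) :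
    (borosMollShift n).coeff k =
      2 * ((n : ℝ) + 1 - k) * (n + 1) / ((2 * ((n : ℝ) + 1 - k) - 1) * (n + k + 1)) *
        (borosMollShift (n + 1)).coeff k := by
  simp only [coeff_borosMollShift]
  rcases le_or_gt k n with h | h
  · obtain ⟨m, rfl⟩ : ∃ m, n = k + m := ⟨n - k, by omega⟩
    have hc := cast_succ_mul_centralBinom_succ m
    have hb := cast_choose_mul_add_one (k + m) k
    rw [if_pos h, if_pos (by omega)]
    simp only [borosMollTerm, show k + m - k = m by omega, show k + m + 1 - k = m + 1 by omega,
      show k + m + 1 + k = k + m + k + 1 by omega,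
      show ((k + m : ℕ) : ℝ) + 1 - k = m + 1 by push_cast; ring]
    rw [show 2 * ((m : ℝ) + 1) - 1 = 2 * m + 1 by ring]
    push_cast at hb ⊢
    field_simp
    linear_combination (2 ^ (2 * (k + m + 1)) * (2 * m + 1 : ℝ) * m.centralBinom) * hb
      - (2 ^ (2 * (k + m)) * 2 * (k + m + 1 : ℝ) * ((k + m + k + 1).choose k)) * hc
  · rcases (by omega : k = n + 1 ∨ n + 1 < k) with rfl | h'
    · simp
    · rw [if_neg (by omega), if_neg (by omega), mul_zero]

theorem borosMollShift_recurrence (n : ℕ) (hn : 1 ≤ n) :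
    C (((n : ℝ) + 1) * (n + 3)) * borosMollShift (n + 1) =
      C (2 * (n : ℝ) + 1) *
          ((X - C 1) * ((X - C 1) * derivative (borosMollShift n) + C 3 * borosMollShift n)) +
        C 5 * ((X - C 1) * derivative (borosMollShift n)) +
        C ((8 * (n : ℝ) ^ 2 + 8 * n + 7) / 2) * borosMollShift n -
        C ((4 * (n : ℝ) - 1) * (4 * n + 1) * (n - 2) / (4 * n)) * borosMollShift (n - 1) := by
  obtain ⟨m, rfl⟩ : ∃ m, n = m + 1 := ⟨n - 1, by omega⟩
  ext (_ | k)
  · simp only [Nat.add_sub_cancel, coeff_add, coeff_sub, mul_coeff_zero, coeff_X_zero,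
      coeff_C_zero, coeff_derivative]
    rw [coeff_borosMollShift_eq_coeff_succ m 0, coeff_borosMollShift_succ (m + 1) 0,
      coeff_borosMollShift_eq_coeff_succ (m + 1) 0]
    have h₁ := two_mul_sub_sub_one_ne_zero (m + 1) 0
    have h₂ := two_mul_sub_sub_one_ne_zero (m + 1 + 1) 0
    push_cast at h₁ h₂ ⊢
    field_simp
    ring
  · simp only [Nat.add_sub_cancel, coeff_add, coeff_sub, coeff_C_mul, coeff_X_sub_C_mul,
      coeff_X_sub_C_mul_derivative, coeff_derivative]
    rw [coeff_borosMollShift_eq_coeff_succ m (k + 1), coeff_succ_borosMollShift_succ (m + 1) k,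
      coeff_borosMollShift_succ (m + 1) (k + 1), coeff_borosMollShift_succ (m + 1) k]
    have h₁ := two_mul_sub_sub_one_ne_zero (m + 1) k
    have h₂ := two_mul_sub_sub_one_ne_zero (m + 1) (k + 1)
    have h₃ := two_mul_sub_sub_one_ne_zero (m + 1 + 1) (k + 1)
    push_cast at h₁ h₂ h₃ ⊢
    field_simp
    ring

theorem borosMoll_recurrence (n : ℕ) (hn : 1 ≤ n) :
    C (((n : ℝ) + 1) * (n + 3)) * borosMoll (n + 1) =
      C (2 * (n : ℝ) + 1) * (X * (X * derivative (borosMoll n) + C 3 * borosMoll n)) +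
        C 5 * (X * derivative (borosMoll n)) +
        C ((8 * (n : ℝ) ^ 2 + 8 * n + 7) / 2) * borosMoll n -
        C ((4 * (n : ℝ) - 1) * (4 * n + 1) * (n - 2) / (4 * n)) * borosMoll (n - 1) := by
  have hd (m : ℕ) : (derivative (borosMollShift m)).comp (X + 1) = derivative (borosMoll m) := by
    simp [borosMoll_eq_comp, derivative_comp]
  have h := congrArg (·.comp (X + 1)) (borosMollShift_recurrence n hn)
  simp only [add_comp, sub_comp, mul_comp, C_comp, X_comp, hd, ← borosMoll_eq_comp] at h
  simpa using h

theorem natDegree_borosMoll_le (n : ℕ) : (borosMoll n).natDegree ≤ n := by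
  have h : (borosMollShift n).natDegree ≤ n :=
    natDegree_le_iff_coeff_eq_zero.mpr fun k hk => by
      rw [coeff_borosMollShift, if_neg (by exact_mod_cast hk.not_ge)]
  rwa [borosMoll_eq_comp, natDegree_comp, ← C_1, natDegree_X_add_C, mul_one]

theorem coeff_R (n i : ℕ) : (R n).coeff i = (borosMoll n).coeff i / (i + 2).factorial := by
  simp only [R, finsetSum_coeff, coeff_C_mul_X_pow, Finset.sum_ite_eq, Finset.mem_range]
  split_ifs with h
  · rfl
  · rw [coeff_eq_zero_of_natDegree_lt ((natDegree_borosMoll_le n).trans_lt (by omega)), zero_div]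

/-- For every integer `n ≥ 1`, the polynomials `R_n` satisfy the recurrence
`R_{n+1}(x) = ((2n+1)x/((n+1)(n+3)) + (8n²+8n+7)/(2(n+1)(n+3)))·R_n(x)
 − ((4n−1)(4n+1)(n−2)/(4n(n+1)(n+3)))·R_{n−1}(x) + (5x/((n+1)(n+3)))·R_n'(x)`. -/
theorem R_recurrence (n : ℕ) (hn : 1 ≤ n) :
    R (n + 1) =
      (Polynomial.C ((2 * (n : ℝ) + 1) / (((n : ℝ) + 1) * ((n : ℝ) + 3))) * Polynomial.X +
          Polynomial.C ((8 * (n : ℝ) ^ 2 + 8 * (n : ℝ) + 7) /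
            (2 * ((n : ℝ) + 1) * ((n : ℝ) + 3)))) * R n -
        Polynomial.C ((4 * (n : ℝ) - 1) * (4 * (n : ℝ) + 1) * ((n : ℝ) - 2) /
            (4 * (n : ℝ) * ((n : ℝ) + 1) * ((n : ℝ) + 3))) * R (n - 1) +
        Polynomial.C (5 / (((n : ℝ) + 1) * ((n : ℝ) + 3))) * Polynomial.X *
          Polynomial.derivative (R n) := by
  have hn' : (n : ℝ) ≠ 0 := Nat.cast_ne_zero.mpr (Nat.one_le_iff_ne_zero.mp hn)
  have h := borosMoll_recurrence n hn
  ext (_ | i)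
  · replace h := congrArg (coeff · 0) h
    simp only [coeff_add, coeff_sub, mul_coeff_zero, coeff_C_zero, coeff_X_zero, coeff_R] at h ⊢
    field_simp at h ⊢
    linear_combination h
  · replace h := congrArg (coeff · (i + 1)) h
    simp only [add_mul, mul_assoc, coeff_add, coeff_sub, coeff_C_mul, coeff_X_mul,
      coeff_X_mul_derivative, coeff_derivative, coeff_R, Nat.factorial_succ] at h ⊢
    push_cast at h ⊢
    field_simp at h ⊢
    linear_combination h
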